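/- arXiv:1302.3087 — 8 statements merged into one kernel-verified Lean document; each statement's English description precedes it below -/
import Mathlib

section
/- Let m > 0 and R > 0, and set A_m(x,ξ) := (1+ξ²)^{−m/2} and 𝔉_{i,j}(x,ξ) := (φ_{i,j}(x), ξ/φ'_{i,j}(x)). Then for every pair i⇝j, every x ∈ I_i and every ξ with |ξ| > R, one has A_m(𝔉_{i,j}(x,ξ)) ≤ C^m · A_m(x,ξ), where C := √((R²+1)/(R²/θ²+1)) < 1. -/
/-- the escape function `A_m(x,ξ) = ⟨ξ⟩^{-m}` decreases by the factor
`C^m` (with `C = √((R²+1)/(R²/θ²+1)) < 1`) along the canonical map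
`𝔉_{i,j}(x,ξ) = (φ_{i,j}(x), ξ/φ'_{i,j}(x))`, for `|ξ| > R`. -/
theorem escape_function_decreases
    (N : ℕ) (hN : 1 ≤ N)
    (Iv : Fin N → Set ℝ) (aa bb : Fin N → ℝ)
    (hIcc : ∀ i, Iv i = Set.Icc (aa i) (bb i)) (hab : ∀ i, aa i ≤ bb i)
    (hdisj : ∀ i j, i ≠ j → Disjoint (Iv i) (Iv j))
    (Adj : Fin N → Fin N → Prop)
    (φ : Fin N → Fin N → ℝ → ℝ)
    (hφsm : ∀ i j, Adj i j → ContDiff ℝ (⊤ : ℕ∞) (φ i j))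
    (hφinj : ∀ i j, Adj i j → Set.InjOn (φ i j) (Iv i))
    (hφd0 : ∀ i j, Adj i j → ∀ x ∈ Iv i, deriv (φ i j) x ≠ 0)
    (hmaps : ∀ i j, Adj i j → φ i j '' Iv i ⊆ interior (Iv j))
    (θ : ℝ) (hθ0 : 0 < θ) (hθ1 : θ < 1)
    (hcontr : ∀ i j, Adj i j → ∀ x ∈ Iv i, |deriv (φ i j) x| ≤ θ)
    (hsep : ∀ i j k l, Adj i j → Adj k l →
      (φ i j '' Iv i ∩ φ k l '' Iv k).Nonempty → i = k ∧ j = l)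
    (m R : ℝ) (hm : 0 < m) (hR : 0 < R) :
    Real.sqrt ((R ^ 2 + 1) / (R ^ 2 / θ ^ 2 + 1)) < 1 ∧
    ∀ i j, Adj i j → ∀ x ∈ Iv i, ∀ ξ : ℝ, R < |ξ| →
      (1 + (ξ / deriv (φ i j) x) ^ 2) ^ (-(m / 2)) ≤
        Real.sqrt ((R ^ 2 + 1) / (R ^ 2 / θ ^ 2 + 1)) ^ m * (1 + ξ ^ 2) ^ (-(m / 2)) := by

  have hθ2 : (0:ℝ) < θ ^ 2 := by positivity
  set q : ℝ := (R ^ 2 + 1) / (R ^ 2 / θ ^ 2 + 1) with hq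
  have hden : (0:ℝ) < R ^ 2 / θ ^ 2 + 1 := by positivity
  have hq0 : 0 < q := by positivity
  have hq1 : q < 1 := by
    rw [hq, div_lt_one hden]
    have hθ21 : θ ^ 2 < 1 := by nlinarith
    have : R ^ 2 < R ^ 2 / θ ^ 2 := by
      rw [lt_div_iff₀ hθ2]
      nlinarith [mul_pos hR hR]
    linarith
  have hCl1 : Real.sqrt q < 1 := by
    have := Real.sqrt_lt_sqrt hq0.le hq1
    simpa using this
  refine ⟨hCl1, ?_⟩
  intro i j hij x hx ξ hξ
  set d := deriv (φ i j) x with hd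
  have hd0 : d ≠ 0 := hφd0 i j hij x hx
  have hdθ : |d| ≤ θ := hcontr i j hij x hx
  have hd2 : 0 < d ^ 2 := by positivity
  have hd2θ : d ^ 2 ≤ θ ^ 2 := by
    have := sq_abs d
    nlinarith [abs_nonneg d]
  have hξ2 : R ^ 2 < ξ ^ 2 := by
    have := sq_abs ξ
    nlinarith [abs_nonneg ξ]
  -- key: q⁻¹ * (1 + ξ²) ≤ 1 + (ξ/d)²
  have hkey : q⁻¹ * (1 + ξ ^ 2) ≤ 1 + (ξ / d) ^ 2 := by
    have h1 : ξ ^ 2 / θ ^ 2 ≤ (ξ / d) ^ 2 := by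
      rw [div_pow, div_le_div_iff₀ hθ2 hd2]
      nlinarith [sq_nonneg ξ]
    have h2 : q⁻¹ * (1 + ξ ^ 2) ≤ 1 + ξ ^ 2 / θ ^ 2 := by
      have hv : (0:ℝ) < (θ ^ 2)⁻¹ := by positivity
      have hv1 : (1:ℝ) ≤ (θ ^ 2)⁻¹ := by
        have h4 : θ ^ 2 * (θ ^ 2)⁻¹ = 1 := mul_inv_cancel₀ hθ2.ne'
        nlinarith
      rw [hq, inv_div, div_mul_eq_mul_div,
        div_le_iff₀ (by positivity : (0:ℝ) < R ^ 2 + 1)]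
      simp only [div_eq_mul_inv]
      nlinarith [mul_nonneg (sub_nonneg.2 hξ2.le) (sub_nonneg.2 hv1)]
    linarith
  have hpos1 : (0:ℝ) < q⁻¹ * (1 + ξ ^ 2) := by positivity
  have hmono : (1 + (ξ / d) ^ 2) ^ (-(m / 2)) ≤ (q⁻¹ * (1 + ξ ^ 2)) ^ (-(m / 2)) :=
    Real.rpow_le_rpow_of_nonpos hpos1 hkey (by linarith)
  refine hmono.trans_eq ?_
  rw [Real.mul_rpow (by positivity) (by positivity), Real.sqrt_eq_rpow]
  congr 1
  rw [← Real.rpow_neg_one q, ← Real.rpow_mul hq0.le, ← Real.rpow_mul hq0.le]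
  norm_num
  ring_nf
end

section
/- Let m > 0, let 1 < κ < 1/θ and set R := (1/θ − κ)^{-1} · max_{x∈I} |τ'(x)|, assuming R > 0. Then for every pair i⇝j, every x ∈ I_i and every ξ with |ξ| > R: writing (x',ξ') := F_{i,j}(x,ξ), one has (1+ξ'²)^{−m/2} ≤ C^m · (1+ξ²)^{−m/2}, where C := √((R²+1)/(κ²R²+1)) < 1. -/
/-- with `1 < κ < 1/θ`, `R := (1/θ−κ)⁻¹ max_I |τ'| > 0`, the escape
function `⟨ξ⟩^{-m}` decreases by `C^m` (with `C = √((R²+1)/(κ²R²+1)) < 1`) along the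
canonical map `F_{i,j}(x,ξ) = (φ_{i,j}(x), ξ/φ'_{i,j}(x) + τ'(φ_{i,j}(x)))`, for `|ξ| > R`. -/
theorem escape_function_decreases_semiclassical
    (N : ℕ) (hN : 1 ≤ N)
    (Iv : Fin N → Set ℝ) (aa bb : Fin N → ℝ)
    (hIcc : ∀ i, Iv i = Set.Icc (aa i) (bb i)) (hab : ∀ i, aa i ≤ bb i)
    (hdisj : ∀ i j, i ≠ j → Disjoint (Iv i) (Iv j))
    (Adj : Fin N → Fin N → Prop)
    (φ : Fin N → Fin N → ℝ → ℝ)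
    (hφsm : ∀ i j, Adj i j → ContDiff ℝ (⊤ : ℕ∞) (φ i j))
    (hφinj : ∀ i j, Adj i j → Set.InjOn (φ i j) (Iv i))
    (hφd0 : ∀ i j, Adj i j → ∀ x ∈ Iv i, deriv (φ i j) x ≠ 0)
    (hmaps : ∀ i j, Adj i j → φ i j '' Iv i ⊆ interior (Iv j))
    (θ : ℝ) (hθ0 : 0 < θ) (hθ1 : θ < 1)
    (hcontr : ∀ i j, Adj i j → ∀ x ∈ Iv i, |deriv (φ i j) x| ≤ θ)
    (hsep : ∀ i j k l, Adj i j → Adj k l →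
      (φ i j '' Iv i ∩ φ k l '' Iv k).Nonempty → i = k ∧ j = l)
    (τ : ℝ → ℝ) (hτ : ContDiff ℝ (⊤ : ℕ∞) τ)
    (M : ℝ) (hM : IsGreatest ((fun x => |deriv τ x|) '' ⋃ i, Iv i) M)
    (m : ℝ) (hm : 0 < m)
    (κ : ℝ) (hκ1 : 1 < κ) (hκθ : κ < 1/θ)
    (R : ℝ) (hR : R = (1/θ - κ)⁻¹ * M) (hRpos : 0 < R) :
    Real.sqrt ((R ^ 2 + 1) / (κ ^ 2 * R ^ 2 + 1)) < 1 ∧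
    ∀ i j, Adj i j → ∀ x ∈ Iv i, ∀ ξ : ℝ, R < |ξ| →
      (1 + (ξ / deriv (φ i j) x + deriv τ (φ i j x)) ^ 2) ^ (-(m / 2)) ≤
        Real.sqrt ((R ^ 2 + 1) / (κ ^ 2 * R ^ 2 + 1)) ^ m * (1 + ξ ^ 2) ^ (-(m / 2)) := by
  have hθκ : 0 < 1/θ - κ := by linarith
  have hMeq : (1/θ - κ) * R = M := by
    rw [hR, ← mul_assoc, mul_inv_cancel₀ hθκ.ne', one_mul]
  have hM0 : 0 < M := hMeq ▸ mul_pos hθκ hRpos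
  have hden : (0:ℝ) < κ ^ 2 * R ^ 2 + 1 := by positivity
  have hDnn : (0:ℝ) ≤ (R ^ 2 + 1) / (κ ^ 2 * R ^ 2 + 1) := by positivity
  have hD1 : (R ^ 2 + 1) / (κ ^ 2 * R ^ 2 + 1) < 1 := by
    rw [div_lt_one hden]
    nlinarith [mul_pos (mul_pos hRpos hRpos) (show (0:ℝ) < κ ^ 2 - 1 by nlinarith)]
  have hC1 : Real.sqrt ((R ^ 2 + 1) / (κ ^ 2 * R ^ 2 + 1)) < 1 := by
    have h := Real.sqrt_lt_sqrt hDnn hD1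
    rwa [Real.sqrt_one] at h
  refine ⟨hC1, ?_⟩
  intro i j hij x hx ξ hξ
  set d := deriv (φ i j) x with hdd
  have hd0 : d ≠ 0 := hφd0 i j hij x hx
  have hdθ : |d| ≤ θ := hcontr i j hij x hx
  have hdpos : 0 < |d| := abs_pos.mpr hd0
  have hτM : |deriv τ (φ i j x)| ≤ M :=
    hM.2 ⟨φ i j x, Set.mem_iUnion.2 ⟨j, interior_subset (hmaps i j hij ⟨x, hx, rfl⟩)⟩, rfl⟩
  set ξ' := ξ / d + deriv τ (φ i j x) with hξ'def
  have h1 : |ξ| / θ ≤ |ξ / d| := by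
    rw [abs_div]
    exact div_le_div_of_nonneg_left (abs_nonneg ξ) hdpos hdθ
  have h2 : |ξ / d| - |deriv τ (φ i j x)| ≤ |ξ'| := by
    have h := abs_add_le ξ' (-(deriv τ (φ i j x)))
    simp only [hξ'def, add_neg_cancel_right, abs_neg] at h
    linarith
  have hξ'2 : κ * |ξ| ≤ |ξ'| := by
    have hdiv : |ξ| / θ = |ξ| * (1/θ) := by ring
    have hnn : 0 ≤ (|ξ| - R) * (1/θ - κ) := mul_nonneg (by linarith) hθκ.le
    nlinarith [h1, h2, hτM, hMeq]
  clear_value d ξ'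
  clear hM hτ hφsm hφinj hφd0 hmaps hcontr hsep hdisj hIcc hab hR hMeq hM0 h1 h2 hτM hdθ hdpos hd0 hdd hξ'def
  have hsq : κ ^ 2 * ξ ^ 2 ≤ ξ' ^ 2 := by
    have h := mul_self_le_mul_self (by positivity) hξ'2
    nlinarith [sq_abs ξ, sq_abs ξ']
  have hR2 : R ^ 2 < ξ ^ 2 := by
    rw [← sq_abs ξ]; exact pow_lt_pow_left₀ hξ hRpos.le two_ne_zero
  have key : (1 + ξ ^ 2) * (κ ^ 2 * R ^ 2 + 1) ≤ (R ^ 2 + 1) * (1 + ξ' ^ 2) := by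
    nlinarith [hsq, mul_le_mul_of_nonneg_left hsq (sq_nonneg R),
      mul_nonneg (show (0:ℝ) ≤ κ ^ 2 - 1 by nlinarith) (sub_nonneg.2 hR2.le)]
  have hA : (0:ℝ) < 1 + ξ' ^ 2 := by positivity
  have hB : (0:ℝ) < 1 + ξ ^ 2 := by positivity
  have hineq : (1 + ξ' ^ 2)⁻¹ ≤ (R ^ 2 + 1) / (κ ^ 2 * R ^ 2 + 1) * (1 + ξ ^ 2)⁻¹ := by
    have hRHS : (R ^ 2 + 1) / (κ ^ 2 * R ^ 2 + 1) * (1 + ξ ^ 2)⁻¹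
        = (R ^ 2 + 1) / ((κ ^ 2 * R ^ 2 + 1) * (1 + ξ ^ 2)) := by
      field_simp
    rw [hRHS, inv_eq_one_div, div_le_div_iff₀ hA (by positivity)]
    calc 1 * ((κ ^ 2 * R ^ 2 + 1) * (1 + ξ ^ 2)) = (1 + ξ ^ 2) * (κ ^ 2 * R ^ 2 + 1) := by ring
      _ ≤ (R ^ 2 + 1) * (1 + ξ' ^ 2) := key
  have hm2 : (0:ℝ) ≤ m / 2 := by linarith
  have lhs_eq : (1 + ξ' ^ 2) ^ (-(m/2)) = ((1 + ξ' ^ 2)⁻¹) ^ (m/2) := by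
    rw [Real.rpow_neg hA.le, ← Real.inv_rpow hA.le]
  have rhs_eq : Real.sqrt ((R ^ 2 + 1) / (κ ^ 2 * R ^ 2 + 1)) ^ m * (1 + ξ ^ 2) ^ (-(m/2))
      = ((R ^ 2 + 1) / (κ ^ 2 * R ^ 2 + 1) * (1 + ξ ^ 2)⁻¹) ^ (m/2) := by
    rw [Real.sqrt_eq_rpow, ← Real.rpow_mul hDnn, show (1:ℝ)/2*m = m/2 by ring,
      Real.rpow_neg hB.le, ← Real.inv_rpow hB.le,
      ← Real.mul_rpow hDnn (inv_nonneg.2 hB.le)]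
  rw [lhs_eq, rhs_eq]
  exact Real.rpow_le_rpow (by positivity) hineq hm2
end

section
/- For every admissible right-infinite word w = (w₀,w₁,w₂,…) ∈ W₊ and every x ∈ I_{w_0}: F_{w_0,w_1}(x, ζ_w(x)) = (x', ζ_{Lw}(x')), where x' := φ_{w_0,w_1}(x) and Lw := (w₁,w₂,…) is the shifted word. -/
/-- Composition `φ_{w_{0,k}} := φ_{w_{k−1},w_k} ∘ ⋯ ∘ φ_{w_0,w_1}` along a right-infinite word. -/
def rightComp {N : ℕ} (φ : Fin N → Fin N → ℝ → ℝ) (w : ℕ → Fin N) : ℕ → ℝ → ℝ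
  | 0 => id
  | k + 1 => φ (w k) (w (k + 1)) ∘ rightComp φ w k

/-- `ζ_w(x) := −Σ_{k≥1} φ'_{w_{0,k}}(x) · τ'(φ_{w_{0,k}}(x))`. -/
noncomputable def zetaFn {N : ℕ} (φ : Fin N → Fin N → ℝ → ℝ) (τ : ℝ → ℝ)
    (w : ℕ → Fin N) (x : ℝ) : ℝ :=
  -∑' k : ℕ, deriv (rightComp φ w (k + 1)) x * deriv τ (rightComp φ w (k + 1) x)

lemma rightComp_shift {N : ℕ} (φ : Fin N → Fin N → ℝ → ℝ) (w : ℕ → Fin N) (k : ℕ) :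
    rightComp φ w (k + 1) = rightComp φ (fun n => w (n + 1)) k ∘ φ (w 0) (w 1) := by
  induction k with
  | zero => funext x; simp [rightComp]
  | succ k ih =>
    funext x
    have h := congrFun ih x
    simp only [rightComp, Function.comp_apply] at h ⊢
    rw [h]

lemma rightComp_contDiff {N : ℕ} {Adj : Fin N → Fin N → Prop}
    {φ : Fin N → Fin N → ℝ → ℝ}
    (hφsm : ∀ i j, Adj i j → ContDiff ℝ (⊤ : ℕ∞) (φ i j))
    {w : ℕ → Fin N} (hw : ∀ l, Adj (w l) (w (l + 1))) (k : ℕ) :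
    ContDiff ℝ (⊤ : ℕ∞) (rightComp φ w k) := by
  induction k with
  | zero => exact contDiff_id
  | succ k ih => exact (hφsm _ _ (hw k)).comp ih

lemma rightComp_mem {N : ℕ} {Adj : Fin N → Fin N → Prop} {Iv : Fin N → Set ℝ}
    {φ : Fin N → Fin N → ℝ → ℝ}
    (hmaps : ∀ i j, Adj i j → φ i j '' Iv i ⊆ interior (Iv j))
    {w : ℕ → Fin N} (hw : ∀ l, Adj (w l) (w (l + 1))) {x : ℝ} (hx : x ∈ Iv (w 0)) (k : ℕ) :
    rightComp φ w k x ∈ Iv (w k) := by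
  induction k with
  | zero => exact hx
  | succ k ih =>
    exact interior_subset (hmaps _ _ (hw k) ⟨_, ih, rfl⟩)

/-- `F_{w₀,w₁}(x, ζ_w(x)) = (x', ζ_{Lw}(x'))` with `x' = φ_{w₀,w₁}(x)` and
`Lw` the shifted word, where `F_{i,j}(x,ξ) = (φ_{i,j}(x), ξ/φ'_{i,j}(x) + τ'(φ_{i,j}(x)))`. -/
theorem canonical_map_on_zeta_branch
    (N : ℕ) (hN : 1 ≤ N)
    (Iv : Fin N → Set ℝ) (aa bb : Fin N → ℝ)
    (hIcc : ∀ i, Iv i = Set.Icc (aa i) (bb i)) (hab : ∀ i, aa i ≤ bb i)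
    (hdisj : ∀ i j, i ≠ j → Disjoint (Iv i) (Iv j))
    (Adj : Fin N → Fin N → Prop)
    (φ : Fin N → Fin N → ℝ → ℝ)
    (hφsm : ∀ i j, Adj i j → ContDiff ℝ (⊤ : ℕ∞) (φ i j))
    (hφinj : ∀ i j, Adj i j → Set.InjOn (φ i j) (Iv i))
    (hφd0 : ∀ i j, Adj i j → ∀ x ∈ Iv i, deriv (φ i j) x ≠ 0)
    (hmaps : ∀ i j, Adj i j → φ i j '' Iv i ⊆ interior (Iv j))
    (θ : ℝ) (hθ0 : 0 < θ) (hθ1 : θ < 1)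
    (hcontr : ∀ i j, Adj i j → ∀ x ∈ Iv i, |deriv (φ i j) x| ≤ θ)
    (hsep : ∀ i j k l, Adj i j → Adj k l →
      (φ i j '' Iv i ∩ φ k l '' Iv k).Nonempty → i = k ∧ j = l)
    (τ : ℝ → ℝ) (hτ : ContDiff ℝ (⊤ : ℕ∞) τ) :
    ∀ w : ℕ → Fin N, (∀ l, Adj (w l) (w (l + 1))) → ∀ x ∈ Iv (w 0),
      ((φ (w 0) (w 1) x,
          zetaFn φ τ w x / deriv (φ (w 0) (w 1)) x + deriv τ (φ (w 0) (w 1) x)) : ℝ × ℝ)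
        = (φ (w 0) (w 1) x, zetaFn φ τ (fun n => w (n + 1)) (φ (w 0) (w 1) x)) := by
  intro w hw x hx
  set Lw : ℕ → Fin N := fun n => w (n + 1) with hLw
  have hLadj : ∀ l, Adj (Lw l) (Lw (l + 1)) := fun l => hw (l + 1)
  set x' : ℝ := φ (w 0) (w 1) x with hx'def
  have hx' : x' ∈ Iv (Lw 0) := interior_subset (hmaps _ _ (hw 0) ⟨x, hx, rfl⟩)
  set c : ℝ := deriv (φ (w 0) (w 1)) x with hc
  have hc0 : c ≠ 0 := hφd0 _ _ (hw 0) x hx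
  -- terms of ζ_{Lw} (shifted by one)
  set t : ℕ → ℝ := fun k =>
    deriv (rightComp φ Lw k) x' * deriv τ (rightComp φ Lw k x') with ht
  -- differentiability facts
  have hdiff : ∀ k, DifferentiableAt ℝ (rightComp φ Lw k) x' :=
    fun k => ((rightComp_contDiff hφsm hLadj k).differentiable (by simp)).differentiableAt
  have hφdiff : DifferentiableAt ℝ (φ (w 0) (w 1)) x :=
    ((hφsm _ _ (hw 0)).differentiable (by simp)).differentiableAt
  -- membership of orbit points
  have hmem : ∀ k, rightComp φ Lw k x' ∈ Iv (Lw k) :=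
    fun k => rightComp_mem hmaps hLadj hx' k
  -- derivative bound
  have hdb : ∀ k, |deriv (rightComp φ Lw k) x'| ≤ θ ^ k := by
    intro k
    induction k with
    | zero => simp [rightComp]
    | succ k ih =>
      have hcomp : deriv (rightComp φ Lw (k + 1)) x'
          = deriv (φ (Lw k) (Lw (k + 1))) (rightComp φ Lw k x')
            * deriv (rightComp φ Lw k) x' := by
        show deriv (φ (Lw k) (Lw (k + 1)) ∘ rightComp φ Lw k) x' = _
        exact deriv_comp x'
          (((hφsm _ _ (hLadj k)).differentiable (by simp)).differentiableAt) (hdiff k)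
      rw [hcomp, abs_mul, pow_succ, mul_comm (θ ^ k) θ]
      exact mul_le_mul (hcontr _ _ (hLadj k) _ (hmem k)) ih (abs_nonneg _)
        (le_trans (abs_nonneg _) (hcontr _ _ (hLadj k) _ (hmem k)))
  -- bound on |τ'| on the compact set ⋃ Iv i
  have hK : IsCompact (⋃ i, Iv i) := by
    have : (⋃ i, Iv i) = ⋃ i, Set.Icc (aa i) (bb i) := by
      simp only [hIcc]
    rw [this]
    exact isCompact_iUnion fun i => isCompact_Icc
  have hτc : ContinuousOn (deriv τ) (⋃ i, Iv i) :=
    (hτ.continuous_deriv (by simp)).continuousOn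
  obtain ⟨M, hM⟩ := hK.exists_bound_of_continuousOn hτc
  -- summability of t
  have hsum : Summable t := by
    refine Summable.of_norm_bounded
      ((summable_geometric_of_lt_one hθ0.le hθ1).mul_right M) ?_
    intro k
    rw [Real.norm_eq_abs, ht, abs_mul]
    have h1 : |deriv τ (rightComp φ Lw k x')| ≤ M := by
      have := hM _ (Set.mem_iUnion.2 ⟨Lw k, hmem k⟩)
      simpa using this
    exact mul_le_mul (hdb k) h1 (abs_nonneg _)
      (le_trans (abs_nonneg _) (hdb k))
  -- expressing terms of ζ_w via t
  have hterm : ∀ k : ℕ,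
      deriv (rightComp φ w (k + 1)) x * deriv τ (rightComp φ w (k + 1) x)
        = c * t k := by
    intro k
    have hshift := rightComp_shift φ w k
    have hpt : rightComp φ w (k + 1) x = rightComp φ Lw k x' := by
      rw [hshift]; rfl
    have hder : deriv (rightComp φ w (k + 1)) x
        = deriv (rightComp φ Lw k) x' * c := by
      rw [hshift]
      exact deriv_comp x (hdiff k) hφdiff
    rw [hpt, hder, ht]; ring
  -- compute ζ_w x
  have hzw : zetaFn φ τ w x = -(c * ∑' k, t k) := by
    unfold zetaFn
    rw [tsum_congr hterm, tsum_mul_left]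
  have hzL : zetaFn φ τ Lw x' = -∑' k, t (k + 1) := rfl
  have hsplit : ∑' k, t k = t 0 + ∑' k, t (k + 1) := hsum.tsum_eq_zero_add
  have ht0 : t 0 = deriv τ x' := by simp [ht, rightComp]
  refine Prod.ext rfl ?_
  show zetaFn φ τ w x / c + deriv τ x' = zetaFn φ τ Lw x'
  rw [hzw, hzL, hsplit, ht0]
  field_simp
  ring
end

section
/- Assume every i ∈ {1,…,N} has at least one successor (there is j with i⇝j). Then for every pair i⇝j, every x ∈ I_i and every ξ ∈ ℝ, the distance function satisfies δ(F_{i,j}(x,ξ)) ≥ (1/θ) · δ(x,ξ). -/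
section Aux

variable {N : ℕ} {Iv : Fin N → Set ℝ} {Adj : Fin N → Fin N → Prop}
  {φ : Fin N → Fin N → ℝ → ℝ} {θ : ℝ}

lemma rc_succ (φ : Fin N → Fin N → ℝ → ℝ) (w : ℕ → Fin N) (k : ℕ) :
    rightComp φ w (k + 1) = φ (w k) (w (k + 1)) ∘ rightComp φ w k := rfl

lemma rc_mem (hmaps : ∀ i j, Adj i j → φ i j '' Iv i ⊆ interior (Iv j))
    (w : ℕ → Fin N) (hw : ∀ l, Adj (w l) (w (l + 1))) (z : ℝ) (hz : z ∈ Iv (w 0)) :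
    ∀ k, rightComp φ w k z ∈ Iv (w k)
  | 0 => hz
  | (k + 1) => interior_subset
      (hmaps _ _ (hw k) (Set.mem_image_of_mem _ (rc_mem hmaps w hw z hz k)))

lemma rc_diff (hφsm : ∀ i j, Adj i j → ContDiff ℝ (⊤ : ℕ∞) (φ i j))
    (w : ℕ → Fin N) (hw : ∀ l, Adj (w l) (w (l + 1))) :
    ∀ k, Differentiable ℝ (rightComp φ w k)
  | 0 => differentiable_id
  | (k + 1) => ((hφsm _ _ (hw k)).differentiable (by simp)).comp (rc_diff hφsm w hw k)

lemma rc_deriv (hφsm : ∀ i j, Adj i j → ContDiff ℝ (⊤ : ℕ∞) (φ i j))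
    (w : ℕ → Fin N) (hw : ∀ l, Adj (w l) (w (l + 1))) (k : ℕ) (z : ℝ) :
    deriv (rightComp φ w (k + 1)) z =
      deriv (φ (w k) (w (k + 1))) (rightComp φ w k z) * deriv (rightComp φ w k) z := by
  rw [rc_succ]
  exact deriv_comp (x := z) (((hφsm _ _ (hw k)).differentiable (by simp)).differentiableAt)
    ((rc_diff hφsm w hw k).differentiableAt)

lemma rc_bound (hφsm : ∀ i j, Adj i j → ContDiff ℝ (⊤ : ℕ∞) (φ i j))
    (hmaps : ∀ i j, Adj i j → φ i j '' Iv i ⊆ interior (Iv j))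
    (hθ0 : 0 < θ)
    (hcontr : ∀ i j, Adj i j → ∀ x ∈ Iv i, |deriv (φ i j) x| ≤ θ)
    (w : ℕ → Fin N) (hw : ∀ l, Adj (w l) (w (l + 1))) (z : ℝ) (hz : z ∈ Iv (w 0)) :
    ∀ k, |deriv (rightComp φ w k) z| ≤ θ ^ k
  | 0 => by simp [rightComp]
  | (k + 1) => by
      rw [rc_deriv hφsm w hw k z, abs_mul, pow_succ']
      exact mul_le_mul (hcontr _ _ (hw k) _ (rc_mem hmaps w hw z hz k))
        (rc_bound hφsm hmaps hθ0 hcontr w hw z hz k) (abs_nonneg _) hθ0.le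

end Aux

/-- the distance function
`δ(x,ξ) = inf { |ξ − ζ_w(x)| : w ∈ W₊, w₀ = i }` (for `x ∈ I_i`) satisfies
`δ(F_{i,j}(x,ξ)) ≥ (1/θ)·δ(x,ξ)`, where
`F_{i,j}(x,ξ) = (φ_{i,j}(x), ξ/φ'_{i,j}(x) + τ'(φ_{i,j}(x)))`. -/
theorem distance_function_expands
    (N : ℕ) (hN : 1 ≤ N)
    (Iv : Fin N → Set ℝ) (aa bb : Fin N → ℝ)
    (hIcc : ∀ i, Iv i = Set.Icc (aa i) (bb i)) (hab : ∀ i, aa i ≤ bb i)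
    (hdisj : ∀ i j, i ≠ j → Disjoint (Iv i) (Iv j))
    (Adj : Fin N → Fin N → Prop)
    (φ : Fin N → Fin N → ℝ → ℝ)
    (hφsm : ∀ i j, Adj i j → ContDiff ℝ (⊤ : ℕ∞) (φ i j))
    (hφinj : ∀ i j, Adj i j → Set.InjOn (φ i j) (Iv i))
    (hφd0 : ∀ i j, Adj i j → ∀ x ∈ Iv i, deriv (φ i j) x ≠ 0)
    (hmaps : ∀ i j, Adj i j → φ i j '' Iv i ⊆ interior (Iv j))
    (θ : ℝ) (hθ0 : 0 < θ) (hθ1 : θ < 1)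
    (hcontr : ∀ i j, Adj i j → ∀ x ∈ Iv i, |deriv (φ i j) x| ≤ θ)
    (hsep : ∀ i j k l, Adj i j → Adj k l →
      (φ i j '' Iv i ∩ φ k l '' Iv k).Nonempty → i = k ∧ j = l)
    (τ : ℝ → ℝ) (hτ : ContDiff ℝ (⊤ : ℕ∞) τ)
    (hsucc : ∀ i : Fin N, ∃ j : Fin N, Adj i j) :
    ∀ i j, Adj i j → ∀ x ∈ Iv i, ∀ ξ : ℝ,
      (1 / θ) * sInf {r : ℝ | ∃ w : ℕ → Fin N,
          (∀ l, Adj (w l) (w (l + 1))) ∧ w 0 = i ∧ r = |ξ - zetaFn φ τ w x|}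
        ≤ sInf {r : ℝ | ∃ w : ℕ → Fin N,
          (∀ l, Adj (w l) (w (l + 1))) ∧ w 0 = j ∧
          r = |(ξ / deriv (φ i j) x + deriv τ (φ i j x)) -
                zetaFn φ τ w (φ i j x)|} := by
  intro i j hij x hx ξ
  have hyj : φ i j x ∈ Iv j := interior_subset (hmaps i j hij ⟨x, hx, rfl⟩)
  have hd : deriv (φ i j) x ≠ 0 := hφd0 i j hij x hx
  have hdθ : |deriv (φ i j) x| ≤ θ := hcontr i j hij x hx
  -- bound for τ' on the compact union
  have hK : IsCompact (⋃ k, Iv k) :=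
    isCompact_iUnion (fun k => by rw [hIcc]; exact isCompact_Icc)
  obtain ⟨C, hC⟩ := hK.exists_bound_of_continuousOn
    ((hτ.continuous_deriv (by simp)).continuousOn)
  apply le_csInf
  · -- the right-hand set is nonempty
    choose f hf using hsucc
    refine ⟨_, fun n => f^[n] j, fun l => ?_, by simp, rfl⟩
    show Adj (f^[l] j) (f^[l + 1] j)
    rw [Function.iterate_succ_apply']
    exact hf _
  · rintro r ⟨w, hw, hw0, rfl⟩
    set y := φ i j x with hy
    have hzy : y ∈ Iv (w 0) := hw0 ▸ hyj
    set c : ℕ → ℝ := fun k =>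
      deriv (rightComp φ w k) y * deriv τ (rightComp φ w k y) with hc
    have hmem : ∀ k, rightComp φ w k y ∈ Iv (w k) := rc_mem hmaps w hw y hzy
    have hcb : ∀ k, |c k| ≤ θ ^ k * C := by
      intro k
      rw [hc, abs_mul]
      exact mul_le_mul (rc_bound hφsm hmaps hθ0 hcontr w hw y hzy k)
        ((Real.norm_eq_abs _ ▸ hC _ (Set.mem_iUnion.2 ⟨w k, hmem k⟩)))
        (abs_nonneg _) (pow_nonneg hθ0.le k)
    have hsc : Summable c :=
      Summable.of_abs (Summable.of_nonneg_of_le (fun k => abs_nonneg _) hcb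
        ((summable_geometric_of_lt_one hθ0.le hθ1).mul_right C))
    -- the prepended word
    set w' : ℕ → Fin N := fun n => Nat.casesOn n i w with hw'
    have hw'adj : ∀ l, Adj (w' l) (w' (l + 1)) := by
      intro l
      cases l with
      | zero => simpa [hw', hw0] using hij
      | succ m => exact hw m
    have hprep : ∀ k, rightComp φ w' (k + 1) = rightComp φ w k ∘ φ i j := by
      intro k
      induction k with
      | zero =>
        funext z
        show φ (w' 0) (w' 1) (rightComp φ w' 0 z) = rightComp φ w 0 (φ i j z)
        simp [hw', hw0, rightComp]
      | succ k ih =>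
        funext z
        show φ (w' (k + 1)) (w' (k + 2)) (rightComp φ w' (k + 1) z)
          = φ (w k) (w (k + 1)) (rightComp φ w k (φ i j z))
        rw [ih]
        rfl
    have hzeta : zetaFn φ τ w' x = deriv (φ i j) x * (zetaFn φ τ w y - deriv τ y) := by
      have h1 : ∀ k : ℕ, deriv (rightComp φ w' (k + 1)) x *
          deriv τ (rightComp φ w' (k + 1) x) = deriv (φ i j) x * c k := by
        intro k
        rw [hprep k, deriv_comp (x := x) ((rc_diff hφsm w hw k).differentiableAt)
          (((hφsm i j hij).differentiable (by simp)).differentiableAt)]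
        simp only [Function.comp_apply, hc, ← hy]
        ring
      have h2 : ∑' k, c k = c 0 + ∑' k, c (k + 1) := hsc.tsum_eq_zero_add
      have hc0 : c 0 = deriv τ y := by simp [hc, rightComp]
      have hz2 : ∑' k, c (k + 1) = -zetaFn φ τ w y := by
        rw [zetaFn, neg_neg]
      rw [zetaFn, tsum_congr h1, tsum_mul_left, h2, hc0, hz2]
      ring
    have key : |ξ - zetaFn φ τ w' x| ≤
        θ * |(ξ / deriv (φ i j) x + deriv τ y) - zetaFn φ τ w y| := by
      have hrw : ξ - zetaFn φ τ w' x =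
          deriv (φ i j) x * ((ξ / deriv (φ i j) x + deriv τ y) - zetaFn φ τ w y) := by
        rw [hzeta]
        field_simp
        ring
      rw [hrw, abs_mul]
      exact mul_le_mul_of_nonneg_right hdθ (abs_nonneg _)
    have hinf : sInf {r : ℝ | ∃ w : ℕ → Fin N,
          (∀ l, Adj (w l) (w (l + 1))) ∧ w 0 = i ∧ r = |ξ - zetaFn φ τ w x|}
        ≤ |ξ - zetaFn φ τ w' x| := by
      apply csInf_le
      · exact ⟨0, by rintro r ⟨u, _, _, rfl⟩; exact abs_nonneg _⟩
      · exact ⟨w', hw'adj, rfl, rfl⟩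
    calc (1 / θ) * sInf {r : ℝ | ∃ w : ℕ → Fin N,
          (∀ l, Adj (w l) (w (l + 1))) ∧ w 0 = i ∧ r = |ξ - zetaFn φ τ w x|}
        ≤ (1 / θ) * |ξ - zetaFn φ τ w' x| := by
          exact mul_le_mul_of_nonneg_left hinf (by positivity)
      _ ≤ (1 / θ) * (θ * |(ξ / deriv (φ i j) x + deriv τ y) - zetaFn φ τ w y|) := by
          exact mul_le_mul_of_nonneg_left key (by positivity)
      _ = |(ξ / deriv (φ i j) x + deriv τ y) - zetaFn φ τ w y| := by
          field_simp
end

section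
/- Let h ∈ (0,1] and m > 0, and let δ̃ : ℝ² → [0,∞) be a smooth function such that for every multi-index α with |α| ≥ 1 there is a constant C_α with |∂^α δ̃(z)| ≤ C_α · h^{-|α|} · √(h² + δ̃(z)²) for all z ∈ ℝ². Define A(z) := (h² + δ̃(z)²)^{−m/2}. Then for every multi-index α there exists a constant C'_α > 0, depending only on m, α and the constants C_β, and not on h, such that |∂^α A(z)| ≤ C'_α · h^{-|α|} · A(z) for all z ∈ ℝ². -/
open Set Finset

/-- Iterated derivative of `t ↦ t ^ p` on the positive reals. -/
lemma aux_iteratedDeriv_rpow (p : ℝ) :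
    ∀ i : ℕ, ∀ t : ℝ, 0 < t →
      iteratedDeriv i (fun s : ℝ => s ^ p) t
        = (∏ j ∈ Finset.range i, (p - j)) * t ^ (p - i) := by
  intro i
  induction i with
  | zero => intro t ht; simp
  | succ i ih =>
    intro t ht
    rw [iteratedDeriv_succ]
    have hev : iteratedDeriv i (fun s : ℝ => s ^ p)
        =ᶠ[nhds t] fun s => (∏ j ∈ Finset.range i, (p - j)) * s ^ (p - i) := by
      filter_upwards [Ioi_mem_nhds ht] with s hs
      exact ih s hs
    rw [hev.deriv_eq,
      deriv_const_mul _ ((Real.hasDerivAt_rpow_const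
        (p := p - i) (Or.inl (ne_of_gt ht))).differentiableAt),
      (Real.hasDerivAt_rpow_const (p := p - i) (Or.inl (ne_of_gt ht))).deriv,
      Finset.prod_range_succ]
    have hc : p - (i + 1 : ℕ) = p - i - 1 := by push_cast; ring
    rw [hc]; ring

/-- if `δ̃ : ℝ² → [0,∞)` is smooth and its derivatives of order `k ≥ 1`
satisfy `‖D^k δ̃(z)‖ ≤ C_k h^{-k} √(h² + δ̃(z)²)`, then the escape function
`A(z) = (h² + δ̃(z)²)^{−m/2}` satisfies, for every order `n`,
`‖D^n A(z)‖ ≤ C'_n h^{-n} A(z)` with `C'_n` depending only on `m`, `n` and the `C_k`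
(in particular not on `h`). -/
theorem escape_function_order_estimates
    (m : ℝ) (hm : 0 < m) (C : ℕ → ℝ) :
    ∀ n : ℕ, ∃ C' : ℝ, 0 < C' ∧ ∀ h ∈ Set.Ioc (0 : ℝ) 1,
      ∀ δ : EuclideanSpace ℝ (Fin 2) → ℝ, ContDiff ℝ (⊤ : ℕ∞) δ → (∀ z, 0 ≤ δ z) →
      (∀ k : ℕ, 1 ≤ k → ∀ z,
        ‖iteratedFDeriv ℝ k δ z‖ ≤ C k * (h ^ k)⁻¹ * Real.sqrt (h ^ 2 + (δ z) ^ 2)) →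
      ∀ z,
        ‖iteratedFDeriv ℝ n
            (fun y : EuclideanSpace ℝ (Fin 2) => (h ^ 2 + (δ y) ^ 2) ^ (-(m / 2))) z‖
          ≤ C' * (h ^ n)⁻¹ * (h ^ 2 + (δ z) ^ 2) ^ (-(m / 2)) := by
  intro n
  set p : ℝ := -(m / 2) with hp
  -- constants
  set Ct : ℕ → ℝ := fun j => max (C j) 1 with hCt
  have hCt1 : ∀ j, (1 : ℝ) ≤ Ct j := fun j => le_max_right _ _
  have hCt0 : ∀ j, (0 : ℝ) ≤ Ct j := fun j => le_trans zero_le_one (hCt1 j)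
  set Bi : ℕ → ℝ := fun i =>
    ∑ j ∈ Finset.range (i + 1), (i.choose j : ℝ) * Ct j * Ct (i - j) with hBi
  have hBi0 : ∀ i, 0 ≤ Bi i := by
    intro i
    refine Finset.sum_nonneg fun j _ => ?_
    positivity
  set B : ℝ := 1 + ∑ i ∈ Finset.range (n + 1), Bi i with hB
  have hB1 : (1 : ℝ) ≤ B := by
    have : 0 ≤ ∑ i ∈ Finset.range (n + 1), Bi i :=
      Finset.sum_nonneg fun i _ => hBi0 i
    simp only [hB]; linarith
  have hBiB : ∀ i, i ≤ n → Bi i ≤ B := by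
    intro i hi
    have h1 : Bi i ≤ ∑ i ∈ Finset.range (n + 1), Bi i :=
      Finset.single_le_sum (fun j _ => hBi0 j)
        (Finset.mem_range.mpr (Nat.lt_succ_of_le hi))
    simp only [hB]; linarith
  set c : ℕ → ℝ := fun i => |∏ j ∈ Finset.range i, (p - j)| with hc
  set Cg : ℝ := ∑ i ∈ Finset.range (n + 1), c i with hCg
  have hcCg : ∀ i, i ≤ n → c i ≤ Cg :=
    fun i hi => Finset.single_le_sum (f := c) (fun j _ => abs_nonneg _)
      (Finset.mem_range.mpr (Nat.lt_succ_of_le hi))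
  have hCgpos : 0 < Cg := by
    have h0 : c 0 = 1 := by simp [hc]
    have := hcCg 0 (Nat.zero_le n)
    linarith
  refine ⟨(n.factorial : ℝ) * Cg * B ^ n, by positivity, ?_⟩
  rintro h ⟨h0, h1⟩ δ hδ hδ0 hbound z
  set X : ℝ := h ^ 2 + δ z ^ 2 with hX
  have hXpos : 0 < X := by positivity
  -- the base function
  set f : EuclideanSpace ℝ (Fin 2) → ℝ := fun y => h ^ 2 + δ y ^ 2 with hf
  have hfpos : ∀ y, 0 < f y := by intro y; positivity
  have hδn : ∀ i : ℕ, ContDiff ℝ i δ := fun i => hδ.of_le (by exact_mod_cast le_top)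
  have hfC : ∀ i : ℕ, ContDiff ℝ i f := fun i => contDiff_const.add ((hδn i).pow 2)
  -- bounds on all derivatives of δ (order 0 included)
  have hδall : ∀ j : ℕ, ∀ y, ‖iteratedFDeriv ℝ j δ y‖
      ≤ Ct j * (h ^ j)⁻¹ * Real.sqrt (h ^ 2 + δ y ^ 2) := by
    intro j y
    rcases Nat.eq_zero_or_pos j with rfl | hj
    · rw [norm_iteratedFDeriv_zero, Real.norm_eq_abs, abs_of_nonneg (hδ0 y)]
      have h2 : δ y ≤ Real.sqrt (h ^ 2 + δ y ^ 2) := by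
        exact Real.le_sqrt_of_sq_le (by nlinarith)
      have hs := Real.sqrt_nonneg (h ^ 2 + δ y ^ 2)
      have := hCt1 0
      simp only [pow_zero, inv_one]
      nlinarith
    · calc ‖iteratedFDeriv ℝ j δ y‖
          ≤ C j * (h ^ j)⁻¹ * Real.sqrt (h ^ 2 + δ y ^ 2) := hbound j hj y
        _ ≤ Ct j * (h ^ j)⁻¹ * Real.sqrt (h ^ 2 + δ y ^ 2) := by
            have hs := Real.sqrt_nonneg (h ^ 2 + δ y ^ 2)
            have hh : (0:ℝ) ≤ (h ^ j)⁻¹ := by positivity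
            exact mul_le_mul_of_nonneg_right
              (mul_le_mul_of_nonneg_right (le_max_left _ _) hh) hs
  -- bound the derivatives of f
  have hfbound : ∀ i : ℕ, 1 ≤ i → ∀ y,
      ‖iteratedFDeriv ℝ i f y‖ ≤ Bi i * (h ^ i)⁻¹ * (h ^ 2 + δ y ^ 2) := by
    intro i hi y
    have hfeq : iteratedFDeriv ℝ i f y = iteratedFDeriv ℝ i (fun w => δ w * δ w) y := by
      have h1 : f = (fun _ => h ^ 2) + fun w => δ w * δ w := by
        funext w; simp [hf]; ring
      rw [h1, iteratedFDeriv_add_apply contDiff_const.contDiffAt ((hδn i).mul (hδn i)).contDiffAt,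
        iteratedFDeriv_const_of_ne (Nat.one_le_iff_ne_zero.mp hi)]
      simp
    rw [hfeq]
    have hmul := norm_iteratedFDeriv_mul_le (𝕜 := ℝ) (N := (i : WithTop ℕ∞))
      (hδn i) (hδn i) y le_rfl
    refine hmul.trans ?_
    have hterm : ∀ j ∈ Finset.range (i + 1),
        (i.choose j : ℝ) * ‖iteratedFDeriv ℝ j δ y‖ * ‖iteratedFDeriv ℝ (i - j) δ y‖
          ≤ ((i.choose j : ℝ) * Ct j * Ct (i - j)) * ((h ^ i)⁻¹ * (h ^ 2 + δ y ^ 2)) := by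
      intro j hj
      have hjle : j ≤ i := Nat.lt_succ_iff.mp (Finset.mem_range.mp hj)
      have e1 := hδall j y
      have e2 := hδall (i - j) y
      have hnn1 : (0:ℝ) ≤ ‖iteratedFDeriv ℝ j δ y‖ := norm_nonneg _
      have hnn2 : (0:ℝ) ≤ ‖iteratedFDeriv ℝ (i - j) δ y‖ := norm_nonneg _
      have hsq : Real.sqrt (h ^ 2 + δ y ^ 2) * Real.sqrt (h ^ 2 + δ y ^ 2)
          = h ^ 2 + δ y ^ 2 := Real.mul_self_sqrt (by positivity)
      have hpow : (h ^ j)⁻¹ * (h ^ (i - j))⁻¹ = (h ^ i)⁻¹ := by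
        rw [← mul_inv, ← pow_add, Nat.add_sub_cancel' hjle]
      calc (i.choose j : ℝ) * ‖iteratedFDeriv ℝ j δ y‖ * ‖iteratedFDeriv ℝ (i - j) δ y‖
          ≤ (i.choose j : ℝ) * (Ct j * (h ^ j)⁻¹ * Real.sqrt (h ^ 2 + δ y ^ 2))
            * (Ct (i - j) * (h ^ (i - j))⁻¹ * Real.sqrt (h ^ 2 + δ y ^ 2)) := by
            have hc0 : (0:ℝ) ≤ (i.choose j : ℝ) := Nat.cast_nonneg _
            apply mul_le_mul
            · exact mul_le_mul_of_nonneg_left e1 hc0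
            · exact e2
            · exact hnn2
            · positivity
        _ = ((i.choose j : ℝ) * Ct j * Ct (i - j)) * (((h ^ j)⁻¹ * (h ^ (i - j))⁻¹)
            * (Real.sqrt (h ^ 2 + δ y ^ 2) * Real.sqrt (h ^ 2 + δ y ^ 2))) := by ring
        _ = ((i.choose j : ℝ) * Ct j * Ct (i - j)) * ((h ^ i)⁻¹ * (h ^ 2 + δ y ^ 2)) := by
            rw [hpow, hsq]
    calc (∑ j ∈ Finset.range (i + 1), (i.choose j : ℝ)
          * ‖iteratedFDeriv ℝ j δ y‖ * ‖iteratedFDeriv ℝ (i - j) δ y‖)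
        ≤ ∑ j ∈ Finset.range (i + 1),
            ((i.choose j : ℝ) * Ct j * Ct (i - j)) * ((h ^ i)⁻¹ * (h ^ 2 + δ y ^ 2)) :=
          Finset.sum_le_sum hterm
      _ = Bi i * ((h ^ i)⁻¹ * (h ^ 2 + δ y ^ 2)) := by rw [hBi, Finset.sum_mul]
      _ = Bi i * (h ^ i)⁻¹ * (h ^ 2 + δ y ^ 2) := by ring
  -- the composition setup
  set t₀ : ℝ := f z with ht₀
  have ht₀pos : 0 < t₀ := hfpos z
  set g : ℝ → ℝ := fun t => t ^ p with hg
  set F : EuclideanSpace ℝ (Fin 2) → ℝ := fun y => t₀⁻¹ * f y with hF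
  have hFz : F z = 1 := by
    simp only [hF]; field_simp
    exact ht₀.symm
  have hgC : ContDiffOn ℝ (n : WithTop ℕ∞) g (Ioi (0:ℝ)) := fun t ht =>
    (Real.contDiffAt_rpow_const_of_ne (ne_of_gt ht)).contDiffWithinAt
  have hFC : ContDiff ℝ (n : WithTop ℕ∞) F := contDiff_const.mul (hfC n)
  have hmaps : MapsTo F univ (Ioi (0:ℝ)) := by
    intro y _
    simp only [hF, Set.mem_Ioi]
    exact mul_pos (inv_pos.mpr ht₀pos) (hfpos y)
  -- bound on derivatives of g at F z = 1
  have hCbound : ∀ i, i ≤ n → ‖iteratedFDerivWithin ℝ i g (Ioi (0:ℝ)) (F z)‖ ≤ Cg := by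
    intro i hi
    rw [hFz, iteratedFDerivWithin_of_isOpen (f := g) i isOpen_Ioi
        (show (1:ℝ) ∈ Set.Ioi (0:ℝ) by simp),
      norm_iteratedFDeriv_eq_norm_iteratedDeriv,
      aux_iteratedDeriv_rpow p i 1 one_pos,
      Real.one_rpow, mul_one, Real.norm_eq_abs]
    exact hcCg i hi
  -- bound on derivatives of F
  have hDbound : ∀ i, 1 ≤ i → i ≤ n →
      ‖iteratedFDerivWithin ℝ i F univ z‖ ≤ (B / h) ^ i := by
    intro i h1i hin
    rw [iteratedFDerivWithin_univ]
    have hFeq : iteratedFDeriv ℝ i F z = t₀⁻¹ • iteratedFDeriv ℝ i f z := by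
      have : F = t₀⁻¹ • f := by funext y; simp [hF, smul_eq_mul]
      rw [this, iteratedFDeriv_const_smul_apply (hfC i).contDiffAt]
    rw [hFeq, norm_smul, Real.norm_eq_abs, abs_of_pos (by positivity : (0:ℝ) < t₀⁻¹)]
    have hb := hfbound i h1i z
    have hBle : Bi i ≤ B ^ i := by
      calc Bi i ≤ B := hBiB i hin
        _ ≤ B ^ i := le_self_pow₀ (by linarith) (Nat.one_le_iff_ne_zero.mp h1i)
    calc t₀⁻¹ * ‖iteratedFDeriv ℝ i f z‖
        ≤ t₀⁻¹ * (Bi i * (h ^ i)⁻¹ * t₀) := by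
          apply mul_le_mul_of_nonneg_left _ (by positivity)
          simpa [ht₀, hf, hX] using hb
      _ = Bi i * (h ^ i)⁻¹ := by field_simp
      _ ≤ B ^ i * (h ^ i)⁻¹ := by
          have : (0:ℝ) ≤ (h ^ i)⁻¹ := by positivity
          nlinarith
      _ = (B / h) ^ i := by rw [div_pow]; field_simp
  -- apply the composition bound
  have hcomp := norm_iteratedFDerivWithin_comp_le (𝕜 := ℝ) (n := n)
    (N := (n : WithTop ℕ∞)) hgC hFC.contDiffOn le_rfl
    (uniqueDiffOn_Ioi 0) uniqueDiffOn_univ hmaps (mem_univ z) hCbound hDbound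
  rw [iteratedFDerivWithin_univ] at hcomp
  -- rewrite the target function
  have hAeq : (fun y : EuclideanSpace ℝ (Fin 2) => (h ^ 2 + δ y ^ 2) ^ p)
      = (t₀ ^ p) • (g ∘ F) := by
    funext y
    have hfy := hfpos y
    simp only [Pi.smul_apply, Function.comp_apply, smul_eq_mul, hg, hF]
    rw [Real.mul_rpow (by positivity) (le_of_lt hfy),
      Real.inv_rpow (le_of_lt ht₀pos)]
    have : (t₀ : ℝ) ^ p ≠ 0 := ne_of_gt (Real.rpow_pos_of_pos ht₀pos p)
    field_simp [hf]
    rfl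
  have hgFC : ContDiff ℝ (n : WithTop ℕ∞) (g ∘ F) :=
    hgC.comp_contDiff hFC fun y => hmaps (mem_univ y)
  have hfinal : iteratedFDeriv ℝ n
      (fun y : EuclideanSpace ℝ (Fin 2) => (h ^ 2 + δ y ^ 2) ^ p) z
      = (t₀ ^ p) • iteratedFDeriv ℝ n (g ∘ F) z := by
    rw [hAeq, iteratedFDeriv_const_smul_apply (hgFC.of_le le_rfl).contDiffAt]
  rw [hfinal, norm_smul, Real.norm_eq_abs,
    abs_of_pos (Real.rpow_pos_of_pos ht₀pos p)]
  have htp : (0:ℝ) < t₀ ^ p := Real.rpow_pos_of_pos ht₀pos p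
  calc t₀ ^ p * ‖iteratedFDeriv ℝ n (g ∘ F) z‖
      ≤ t₀ ^ p * ((n.factorial : ℝ) * Cg * (B / h) ^ n) := by
        apply mul_le_mul_of_nonneg_left hcomp (le_of_lt htp)
    _ = (n.factorial : ℝ) * Cg * B ^ n * (h ^ n)⁻¹ * t₀ ^ p := by
        rw [div_pow]; field_simp
    _ = (n.factorial : ℝ) * Cg * B ^ n * (h ^ n)⁻¹ * (h ^ 2 + δ z ^ 2) ^ p := by
        rw [ht₀, hf]
end

section
/- Let (μ_{j,n})_{j,n∈ℕ} be nonnegative reals and (λ_{j,n})_{j,n∈ℕ} complex numbers such that: for each n, the sequence j ↦ μ_{j,n} is non-increasing and the sequence j ↦ |λ_{j,n}| is non-increasing; the Weyl inequalities ∏_{j=0}^{k} |λ_{j,n}| ≤ ∏_{j=0}^{k} μ_{j,n} hold for all k, n; and there is B > 0 with μ_{j,n} ≤ B for all j, n. If N : ℕ → ℕ satisfies N(n) → ∞ and μ_{N(n),n} → 0 as n → ∞, then for every C > 1 one has |λ_{⌊C·N(n)⌋,n}| → 0 as n → ∞. -/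
open Filter

/-- abstract singular-value/eigenvalue lemma. If the singular values
`μ_{j,n}` and moduli of eigenvalues `|λ_{j,n}|` are non-increasing in `j`, satisfy the
Weyl inequalities `∏_{j≤k} |λ_{j,n}| ≤ ∏_{j≤k} μ_{j,n}`, are uniformly bounded by `B`,
and `N(n) → ∞` with `μ_{N(n),n} → 0`, then `|λ_{⌊C·N(n)⌋,n}| → 0` for every `C > 1`. -/
theorem singular_values_control_eigenvalues
    (μ : ℕ → ℕ → ℝ) (lam : ℕ → ℕ → ℂ)
    (hμ0 : ∀ j n, 0 ≤ μ j n)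
    (hμmono : ∀ n, Antitone fun j => μ j n)
    (hlammono : ∀ n, Antitone fun j => ‖lam j n‖)
    (hWeyl : ∀ k n, ∏ j ∈ Finset.range (k + 1), ‖lam j n‖ ≤
      ∏ j ∈ Finset.range (k + 1), μ j n)
    (B : ℝ) (hB : 0 < B) (hBμ : ∀ j n, μ j n ≤ B)
    (Nf : ℕ → ℕ) (hNf : Tendsto Nf atTop atTop)
    (hμN : Tendsto (fun n => μ (Nf n) n) atTop (nhds 0)) :
    ∀ C : ℝ, 1 < C →
      Tendsto (fun n => ‖lam (⌊C * (Nf n : ℝ)⌋₊) n‖) atTop (nhds 0) := by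
  intro C hC
  rw [Metric.tendsto_nhds]
  intro ε hε
  set ε' : ℝ := min ε 1 / 2 with hε'def
  have hε'0 : 0 < ε' := by positivity
  have hε'1 : ε' ≤ 1 := by
    have : min ε 1 ≤ 1 := min_le_right _ _
    linarith
  have hε'ε : ε' < ε := by
    have : min ε 1 ≤ ε := min_le_left _ _
    linarith
  set B' : ℝ := max B 1 with hB'def
  have hB'1 : (1 : ℝ) ≤ B' := le_max_right _ _
  have hB'0 : (0 : ℝ) < B' := lt_of_lt_of_le one_pos hB'1
  set a : ℝ := C / (C - 1) with hadef
  set b : ℝ := 1 / (C - 1) with hbdef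
  set δ : ℝ := ε' ^ a / B' ^ b with hδdef
  have hδ0 : 0 < δ := by
    apply div_pos (Real.rpow_pos_of_pos hε'0 _) (Real.rpow_pos_of_pos hB'0 _)
  filter_upwards [hμN.eventually_lt_const hδ0] with n hn
  set t : ℕ := Nf n with htdef
  set m : ℕ := ⌊C * (t : ℝ)⌋₊ with hmdef
  have htm : t ≤ m := by
    apply Nat.le_floor
    nlinarith [Nat.cast_nonneg (α := ℝ) t]
  have hsC : C * (t : ℝ) < ((m : ℝ) + 1) := by
    have := Nat.lt_succ_floor (C * (t : ℝ))
    push_cast at this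
    linarith
  set r : ℕ := m + 1 - t with hrdef
  have hrcast : (r : ℝ) = (m : ℝ) + 1 - (t : ℝ) := by
    rw [hrdef]
    push_cast [Nat.cast_sub (by omega : t ≤ m + 1)]
    ring
  -- Step A : ‖lam m n‖ ^ (m+1) ≤ ∏ over range (m+1) of ‖lam j n‖
  have hA : ‖lam m n‖ ^ (m + 1) ≤ ∏ j ∈ Finset.range (m + 1), ‖lam j n‖ := by
    calc ‖lam m n‖ ^ (m + 1) = ∏ _j ∈ Finset.range (m + 1), ‖lam m n‖ := by
          rw [Finset.prod_const, Finset.card_range]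
      _ ≤ ∏ j ∈ Finset.range (m + 1), ‖lam j n‖ :=
          Finset.prod_le_prod (fun _ _ => norm_nonneg _)
            (fun j hj => hlammono n (Nat.le_of_lt_succ (Finset.mem_range.1 hj)))
  -- Step B : ∏ over range (m+1) of μ j n ≤ B' ^ t * (μ t n) ^ r
  have hB2 : ∏ j ∈ Finset.range (m + 1), μ j n ≤ B' ^ t * μ t n ^ r := by
    have hsplit : m + 1 = t + r := by omega
    rw [hsplit, Finset.prod_range_add]
    apply mul_le_mul
    · calc ∏ j ∈ Finset.range t, μ j n ≤ ∏ _j ∈ Finset.range t, B' :=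
            Finset.prod_le_prod (fun j _ => hμ0 j n)
              (fun j _ => le_trans (hBμ j n) (le_max_left _ _))
        _ = B' ^ t := by rw [Finset.prod_const, Finset.card_range]
    · calc ∏ i ∈ Finset.range r, μ (t + i) n ≤ ∏ _i ∈ Finset.range r, μ t n :=
            Finset.prod_le_prod (fun i _ => hμ0 _ n)
              (fun i _ => hμmono n (Nat.le_add_right t i))
        _ = μ t n ^ r := by rw [Finset.prod_const, Finset.card_range]
    · exact Finset.prod_nonneg (fun i _ => hμ0 _ n)
    · positivity
  -- Step C : B' ^ t * δ ^ r ≤ ε' ^ (m + 1)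
  have hC1 : (0:ℝ) < C - 1 := by linarith
  have har : ((m : ℝ) + 1) ≤ a * r := by
    rw [hrcast, hadef, div_mul_eq_mul_div, le_div_iff₀ hC1]
    nlinarith [Nat.cast_nonneg (α := ℝ) t]
  have hbr : (t : ℝ) ≤ b * r := by
    rw [hrcast, hbdef, div_mul_eq_mul_div, le_div_iff₀ hC1]
    nlinarith [Nat.cast_nonneg (α := ℝ) t]
  have hδr : δ ^ r = ε' ^ (a * r) / B' ^ (b * r) := by
    rw [hδdef, div_pow, ← Real.rpow_natCast (ε' ^ a) r, ← Real.rpow_natCast (B' ^ b) r,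
      ← Real.rpow_mul hε'0.le, ← Real.rpow_mul hB'0.le]
  have hCineq : B' ^ t * δ ^ r ≤ ε' ^ (m + 1) := by
    rw [hδr]
    have h1 : ε' ^ (a * r) ≤ ε' ^ (((m : ℝ) + 1)) :=
      Real.rpow_le_rpow_of_exponent_ge hε'0 hε'1 har
    have h2 : (B' : ℝ) ^ (t : ℝ) ≤ B' ^ (b * r) :=
      Real.rpow_le_rpow_of_exponent_le hB'1 hbr
    have hBt : (B' : ℝ) ^ t = B' ^ (t : ℝ) := (Real.rpow_natCast B' t).symm
    have hεm : (ε' : ℝ) ^ (m + 1) = ε' ^ (((m : ℝ) + 1)) := by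
      rw [← Real.rpow_natCast ε' (m + 1)]
      push_cast
      ring_nf
    rw [hBt, hεm, ← mul_div_assoc, div_le_iff₀ (Real.rpow_pos_of_pos hB'0 _)]
    calc B' ^ (t : ℝ) * ε' ^ (a * r) ≤ B' ^ (b * r) * ε' ^ (((m:ℝ)+1)) :=
          mul_le_mul h2 h1 (Real.rpow_nonneg hε'0.le _) (Real.rpow_nonneg hB'0.le _)
      _ = ε' ^ (((m:ℝ)+1)) * B' ^ (b * r) := by ring
  -- Combine
  have hμδ : μ t n ^ r ≤ δ ^ r := pow_le_pow_left₀ (hμ0 t n) hn.le r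
  have hmain : ‖lam m n‖ ^ (m + 1) ≤ ε' ^ (m + 1) := by
    calc ‖lam m n‖ ^ (m + 1) ≤ ∏ j ∈ Finset.range (m + 1), ‖lam j n‖ := hA
      _ ≤ ∏ j ∈ Finset.range (m + 1), μ j n := hWeyl m n
      _ ≤ B' ^ t * μ t n ^ r := hB2
      _ ≤ B' ^ t * δ ^ r := by
          apply mul_le_mul_of_nonneg_left hμδ (by positivity)
      _ ≤ ε' ^ (m + 1) := hCineq
  have hfinal : ‖lam m n‖ ≤ ε' :=
    (pow_le_pow_iff_left₀ (norm_nonneg _) hε'0.le (Nat.succ_ne_zero m)).1 hmain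
  rw [Real.dist_eq, sub_zero, abs_of_nonneg (norm_nonneg _)]
  exact lt_of_le_of_lt hfinal hε'ε
end

section
/- Let (μ_{j,n})_{j,n∈ℕ} be nonnegative reals and (λ_{j,n})_{j,n∈ℕ} complex numbers such that: for each n, j ↦ μ_{j,n} is non-increasing and j ↦ |λ_{j,n}| is non-increasing; the Weyl inequalities ∏_{j=0}^{k} |λ_{j,n}| ≤ ∏_{j=0}^{k} μ_{j,n} hold for all k, n; and there is B > 0 with μ_{j,n} ≤ B for all j, n. Suppose N : ℕ → ℕ satisfies N(n) → ∞ and: for every ε > 0 there exists A_ε such that for all n ≥ A_ε, #{ j ∈ ℕ : μ_{j,n} > ε } < N(n). Then for every C > 1 and every ε > 0 there exists B_{C,ε} such that for all n ≥ B_{C,ε}, #{ j ∈ ℕ : |λ_{j,n}| > ε } ≤ C·N(n). -/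
/-! If `‖λ_m‖ > ε`, monotonicity and the Weyl inequalities give
`ε^(m+1) ≤ ∏_{j ≤ m} μ_j ≤ B^L δ^(m+1-L)`, where `L` counts the singular values above `δ`.
For `δ = ε (ε/B)^(1/(C-1))` taking logarithms turns this into `m + 1 ≤ C L`, and `L < N(n)`
for large `n` by hypothesis. -/

open Filter Finset

noncomputable def singularValueThreshold (ε B C : ℝ) : ℝ := ε * (ε / B) ^ (C - 1)⁻¹

lemma singularValueThreshold_pos {ε B C : ℝ} (hε : 0 < ε) (hB : 0 < B) :
    0 < singularValueThreshold ε B C := by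
  unfold singularValueThreshold; positivity

lemma le_mul_of_pow_le_pow_mul_singularValueThreshold_pow {ε B C : ℝ} {L k : ℕ}
    (hε : 0 < ε) (hεB : ε < B) (hC : 1 < C) (hLk : L ≤ k)
    (h : ε ^ k ≤ B ^ L * singularValueThreshold ε B C ^ (k - L)) : (k : ℝ) ≤ C * L := by
  set t := (C - 1)⁻¹
  set D := Real.log B - Real.log ε
  have hB : 0 < B := hε.trans hεB
  have hD : 0 < D := sub_pos.mpr (Real.log_lt_log hε hεB)
  have hlogδ : Real.log (singularValueThreshold ε B C) = Real.log ε - t * D := by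
    rw [singularValueThreshold, Real.log_mul hε.ne' (by positivity),
      Real.log_rpow (div_pos hε hB), Real.log_div hε.ne' hB.ne']
    ring
  have hlog := Real.log_le_log (by positivity) h
  rw [Real.log_mul (by positivity) (pow_ne_zero _ (singularValueThreshold_pos hε hB).ne'),
    Real.log_pow, Real.log_pow, Real.log_pow, hlogδ, Nat.cast_sub hLk] at hlog
  have hexcess : ((k : ℝ) - L) * t ≤ L := by
    have : ((k : ℝ) - L) * t * D ≤ L * D := by linear_combination hlog
    exact le_of_mul_le_mul_right this hD
  have ht : t * (C - 1) = 1 := inv_mul_cancel₀ (by linarith)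
  have hkL : ((k : ℝ) - L) ≤ L * (C - 1) := by
    calc ((k : ℝ) - L) = ((k : ℝ) - L) * t * (C - 1) := by rw [mul_assoc, ht, mul_one]
      _ ≤ L * (C - 1) := mul_le_mul_of_nonneg_right hexcess (by linarith)
  linarith

lemma pow_succ_le_prod_range_of_lt {a : ℕ → ℝ} (ha : Antitone a) {ε : ℝ} (hε : 0 ≤ ε) {m : ℕ}
    (hm : ε < a m) : ε ^ (m + 1) ≤ ∏ j ∈ range (m + 1), a j := by
  simpa using prod_le_prod (s := range (m + 1)) (f := fun _ => ε) (fun _ _ => hε)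
    fun j hj => hm.le.trans (ha (mem_range_succ_iff.mp hj))

lemma prod_range_le_pow_mul_pow {s : ℕ → ℝ} {B δ : ℝ} {L k : ℕ} (hs0 : ∀ j, 0 ≤ s j)
    (hsB : ∀ j, s j ≤ B) (hsδ : ∀ j, L ≤ j → s j ≤ δ) (hLk : L ≤ k) :
    ∏ j ∈ range k, s j ≤ B ^ L * δ ^ (k - L) := by
  obtain ⟨r, rfl⟩ := Nat.exists_eq_add_of_le hLk
  rw [prod_range_add, Nat.add_sub_cancel_left]
  have hhead : ∏ j ∈ range L, s j ≤ B ^ L := by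
    simpa using prod_le_prod (s := range L) (fun j _ => hs0 j) fun j _ => hsB j
  have htail : ∏ i ∈ range r, s (L + i) ≤ δ ^ r := by
    simpa using prod_le_prod (s := range r) (fun i _ => hs0 (L + i))
      fun i _ => hsδ (L + i) (Nat.le_add_right L i)
  exact mul_le_mul hhead htail (prod_nonneg fun i _ => hs0 _) (pow_nonneg ((hs0 0).trans (hsB 0)) L)

lemma Antitone.le_of_ncard_le {α : Type*} [LinearOrder α] {f : ℕ → α} (hf : Antitone f) {a : α}
    (hfin : {j | a < f j}.Finite) {j : ℕ} (hj : {j | a < f j}.ncard ≤ j) : f j ≤ a := by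
  by_contra! hlt
  have hsub : (Iic j : Set ℕ) ⊆ {j | a < f j} := fun i hi => hlt.trans_le (hf (mem_Iic.mp hi))
  have := Set.ncard_le_ncard hsub hfin
  rw [Set.ncard_coe_finset, Nat.card_Iic] at this
  omega

lemma Set.finite_and_ncard_le_of_forall_succ_le {S : Set ℕ} {K : ℝ} (hK : 0 ≤ K)
    (h : ∀ m ∈ S, (m + 1 : ℝ) ≤ K) : S.Finite ∧ (S.ncard : ℝ) ≤ K := by
  have hsub : S ⊆ Finset.range ⌊K⌋₊ := fun m hm => by
    rw [Finset.mem_coe, Finset.mem_range, ← Nat.add_one_le_iff, Nat.le_floor_iff hK]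
    exact_mod_cast h m hm
  refine ⟨(Finset.range ⌊K⌋₊).finite_toSet.subset hsub, ?_⟩
  calc (S.ncard : ℝ) ≤ ⌊K⌋₊ := by
        exact_mod_cast (Set.ncard_le_ncard hsub (finite_toSet _)).trans_eq (by simp)
    _ ≤ K := Nat.floor_le hK

lemma succ_le_mul_of_weyl {a s : ℕ → ℝ} {B ε C : ℝ} {L m : ℕ} (ha : Antitone a)
    (hs0 : ∀ j, 0 ≤ s j) (hsB : ∀ j, s j ≤ B)
    (hweyl : ∀ k, ∏ j ∈ range (k + 1), a j ≤ ∏ j ∈ range (k + 1), s j)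
    (hε : 0 < ε) (hεB : ε < B) (hC : 1 < C)
    (hL : ∀ j, L ≤ j → s j ≤ singularValueThreshold ε B C) (hm : ε < a m) :
    (m + 1 : ℝ) ≤ C * L := by
  rcases le_or_gt (m + 1) L with hmL | hLm
  · calc (m + 1 : ℝ) ≤ L := by exact_mod_cast hmL
      _ ≤ C * L := le_mul_of_one_le_left L.cast_nonneg hC.le
  · have hweyl_bound : ε ^ (m + 1) ≤ B ^ L * singularValueThreshold ε B C ^ (m + 1 - L) :=
      calc ε ^ (m + 1) ≤ ∏ j ∈ range (m + 1), a j := pow_succ_le_prod_range_of_lt ha hε.le hm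
        _ ≤ ∏ j ∈ range (m + 1), s j := hweyl m
        _ ≤ _ := prod_range_le_pow_mul_pow hs0 hsB hL hLm.le
    exact_mod_cast le_mul_of_pow_le_pow_mul_singularValueThreshold_pow hε hεB hC hLm.le hweyl_bound

theorem eigenvalue_counting_from_singular_values_general
    (μ : ℕ → ℕ → ℝ) (lam : ℕ → ℕ → ℂ)
    (hμ0 : ∀ j n, 0 ≤ μ j n)
    (hμmono : ∀ n, Antitone fun j => μ j n)
    (hlammono : ∀ n, Antitone fun j => ‖lam j n‖)
    (hWeyl : ∀ k n, ∏ j ∈ Finset.range (k + 1), ‖lam j n‖ ≤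
      ∏ j ∈ Finset.range (k + 1), μ j n)
    (B : ℝ) (hBμ : ∀ j n, μ j n ≤ B)
    (Nf : ℕ → ℕ)
    (hcount : ∀ ε : ℝ, 0 < ε → ∃ A : ℕ, ∀ n ≥ A,
      {j : ℕ | ε < μ j n}.Finite ∧ {j : ℕ | ε < μ j n}.ncard < Nf n) :
    ∀ C : ℝ, 1 < C → ∀ ε : ℝ, 0 < ε → ∃ B' : ℕ, ∀ n ≥ B',
      {j : ℕ | ε < ‖lam j n‖}.Finite ∧
      ({j : ℕ | ε < ‖lam j n‖}.ncard : ℝ) ≤ C * (Nf n : ℝ) := by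
  intro C hC ε hε
  have hCN : ∀ n, 0 ≤ C * (Nf n : ℝ) := fun n => by positivity
  rcases le_or_gt B ε with hBε | hεB
  · refine ⟨0, fun n _ => Set.finite_and_ncard_le_of_forall_succ_le (hCN n) fun m hm => ?_⟩
    have hlam_le : ‖lam m n‖ ≤ B :=
      calc ‖lam m n‖ ≤ ‖lam 0 n‖ := hlammono n m.zero_le
        _ ≤ μ 0 n := by simpa using hWeyl 0 n
        _ ≤ B := hBμ 0 n
    exact absurd hm (not_lt.mpr (hlam_le.trans hBε))
  · obtain ⟨A, hA⟩ := hcount _ (singularValueThreshold_pos (C := C) hε (hε.trans hεB))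
    refine ⟨A, fun n hn => Set.finite_and_ncard_le_of_forall_succ_le (hCN n) fun m hm => ?_⟩
    obtain ⟨hfin, hcard⟩ := hA n hn
    calc (m + 1 : ℝ) ≤ C * {j | singularValueThreshold ε B C < μ j n}.ncard :=
          succ_le_mul_of_weyl (hlammono n) (hμ0 · n) (hBμ · n) (hWeyl · n) hε hεB hC
            (fun j hj => (hμmono n).le_of_ncard_le hfin hj) hm
      _ ≤ C * Nf n := by gcongr

/-- counting version of the singular-value/eigenvalue comparison. Under
the Weyl inequalities and monotonicity, if eventually at most `N(n)` singular values
exceed any given `ε`, then for every `C > 1`, eventually at most `C·N(n)` eigenvalues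
exceed `ε` in modulus. -/
theorem eigenvalue_counting_from_singular_values
    (μ : ℕ → ℕ → ℝ) (lam : ℕ → ℕ → ℂ)
    (hμ0 : ∀ j n, 0 ≤ μ j n)
    (hμmono : ∀ n, Antitone fun j => μ j n)
    (hlammono : ∀ n, Antitone fun j => ‖lam j n‖)
    (hWeyl : ∀ k n, ∏ j ∈ Finset.range (k + 1), ‖lam j n‖ ≤
      ∏ j ∈ Finset.range (k + 1), μ j n)
    (B : ℝ) (hB : 0 < B) (hBμ : ∀ j n, μ j n ≤ B)
    (Nf : ℕ → ℕ) (hNf : Tendsto Nf atTop atTop)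
    (hcount : ∀ ε : ℝ, 0 < ε → ∃ A : ℕ, ∀ n ≥ A,
      {j : ℕ | ε < μ j n}.Finite ∧ {j : ℕ | ε < μ j n}.ncard < Nf n) :
    ∀ C : ℝ, 1 < C → ∀ ε : ℝ, 0 < ε → ∃ B' : ℕ, ∀ n ≥ B',
      {j : ℕ | ε < ‖lam j n‖}.Finite ∧
      ({j : ℕ | ε < ‖lam j n‖}.ncard : ℝ) ≤ C * (Nf n : ℝ) :=
  eigenvalue_counting_from_singular_values_general μ lam hμ0 hμmono hlammono hWeyl B hBμ Nf hcount
end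

section
/- Let a, b, c, d ∈ ℝ with ad − bc = D where D ∈ {−1, 1}, and let g(x) := (ax+b)/(cx+d). Let x, η ∈ ℝ with x ≠ η, cx + d ≠ 0 and cη + d ≠ 0, and set ξ := 2D/(x − η), x' := g(x), and ξ' := D·(cx+d)²·ξ − 2c·(cx+d). Then ξ' = 2(cx+d)(cη+d)/(x − η); in particular ξ' ≠ 0, and x' − 2D/ξ' = g(η). Hence in the coordinates (x, η) with η = x − 2D/ξ, the map (x,ξ) ↦ (g(x), D(cx+d)²ξ − 2c(cx+d)) becomes the decoupled map (x,η) ↦ (g(x), g(η)). -/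
/-! With `p = cx + d` and `q = cη + d` one has `q = p - c (x - η)`, so for `D² = 1` the
transformed momentum `D p² · 2D/(x - η) - 2cp` collapses to `2pq/(x - η)`. Then `2D/ξ'` is
`D (x - η)/(pq)`, which is exactly the classical difference `g x - g η = (ad - bc)(x - η)/(pq)`
of a Möbius map. -/

theorem mobius_sub_mobius {K : Type*} [Field K] (a b c d x y : K)
    (hx : c * x + d ≠ 0) (hy : c * y + d ≠ 0) :
    (a * x + b) / (c * x + d) - (a * y + b) / (c * y + d)
      = (a * d - b * c) * (x - y) / ((c * x + d) * (c * y + d)) := by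
  rw [div_sub_div _ _ hx hy]
  ring

theorem momentum_transform_eq {K : Type*} [Field K] (c d D x η : K) (hD : D ^ 2 = 1)
    (hxη : x ≠ η) :
    D * (c * x + d) ^ 2 * (2 * D / (x - η)) - 2 * c * (c * x + d)
      = 2 * (c * x + d) * (c * η + d) / (x - η) := by
  have hxη' : x - η ≠ 0 := sub_ne_zero.mpr hxη
  field_simp
  linear_combination 2 * (c * x + d) ^ 2 * hD

/-- decoupling change of variables for the canonical map of a Möbius
transformation `g(x) = (ax+b)/(cx+d)` with `ad − bc = D = ±1`. With `ξ = 2D/(x−η)`,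
`x' = g(x)` and `ξ' = D(cx+d)²ξ − 2c(cx+d)`, one has `ξ' = 2(cx+d)(cη+d)/(x−η)`,
`ξ' ≠ 0`, and `x' − 2D/ξ' = g(η)`; i.e. in the coordinates `(x,η)` the map becomes
`(x,η) ↦ (g(x), g(η))`. -/
theorem mobius_decoupled_coordinates
    (a b c d D : ℝ) (hD : D = 1 ∨ D = -1) (hdet : a * d - b * c = D)
    (x η : ℝ) (hxη : x ≠ η) (h1 : c * x + d ≠ 0) (h2 : c * η + d ≠ 0) :
    D * (c * x + d) ^ 2 * (2 * D / (x - η)) - 2 * c * (c * x + d)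
        = 2 * (c * x + d) * (c * η + d) / (x - η) ∧
    D * (c * x + d) ^ 2 * (2 * D / (x - η)) - 2 * c * (c * x + d) ≠ 0 ∧
    (a * x + b) / (c * x + d) -
        2 * D / (D * (c * x + d) ^ 2 * (2 * D / (x - η)) - 2 * c * (c * x + d))
      = (a * η + b) / (c * η + d) := by
  have hD2 : D ^ 2 = 1 := by rcases hD with rfl | rfl <;> norm_num
  have hxη' : x - η ≠ 0 := sub_ne_zero.mpr hxη
  have hmomentum := momentum_transform_eq c d D x η hD2 hxη
  have hne : 2 * (c * x + d) * (c * η + d) / (x - η) ≠ 0 := by positivity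
  refine ⟨hmomentum, hmomentum ▸ hne, ?_⟩
  rw [hmomentum, sub_eq_iff_eq_add', ← sub_eq_iff_eq_add, mobius_sub_mobius a b c d x η h1 h2,
    hdet]
  field_simp
end
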